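/- For all integers n ≥ 0 and ℓ ≥ 0, the moment ∫_{−1}^1 t^n P_ℓ(t) dt of the Legendre polynomial P_ℓ is nonnegative. -/
import Mathlib

open Polynomial intervalIntegral

lemma vanish (l j : ℕ) (hj : j < l) (a : ℝ) (ha : a^2 = 1) :
    (derivative^[j] ((X^2 - 1 : ℝ[X])^l)).eval a = 0 := by
  have hdvd : (X - C a)^l ∣ (X^2 - 1 : ℝ[X])^l := by
    apply pow_dvd_pow_of_dvd
    have : IsRoot (X^2 - 1 : ℝ[X]) a := by simp [IsRoot, ha]
    exact dvd_iff_isRoot.mpr this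
  obtain ⟨r, hr⟩ := Polynomial.pow_sub_dvd_iterate_derivative_of_pow_dvd j hdvd
  rw [hr, eval_mul, eval_pow, eval_sub, eval_X, eval_C, sub_self,
    zero_pow (by omega), zero_mul]

lemma ibp (p q : ℝ[X]) (h1 : q.eval 1 = 0) (h2 : q.eval (-1) = 0) :
    ∫ t in (-1:ℝ)..1, p.eval t * (derivative q).eval t
      = - ∫ t in (-1:ℝ)..1, (derivative p).eval t * q.eval t := by
  have := intervalIntegral.integral_mul_deriv_eq_deriv_mul
    (u := fun t => p.eval t) (v := fun t => q.eval t)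
    (u' := fun t => (derivative p).eval t) (v' := fun t => (derivative q).eval t)
    (a := (-1:ℝ)) (b := 1)
    (fun x _ => p.hasDerivAt x) (fun x _ => q.hasDerivAt x)
    ((Polynomial.continuous _).intervalIntegrable _ _)
    ((Polynomial.continuous _).intervalIntegrable _ _)
  rw [this, h1, h2]
  ring

lemma iter_ibp (n l : ℕ) : ∀ k, k ≤ l →
    (∫ t in (-1:ℝ)..1, t^n * (derivative^[l] ((X^2 - 1 : ℝ[X])^l)).eval t)
      = (-1:ℝ)^k * ∫ t in (-1:ℝ)..1,
          (derivative^[k] (X^n : ℝ[X])).eval t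
            * (derivative^[l-k] ((X^2 - 1 : ℝ[X])^l)).eval t := by
  intro k
  induction k with
  | zero => intro _; simp
  | succ k ih =>
    intro hk
    rw [ih (by omega)]
    have hlk : l - k = (l - (k+1)) + 1 := by omega
    rw [hlk, Function.iterate_succ_apply',
      ibp _ _ (vanish l _ (by omega) 1 (by norm_num))
        (vanish l _ (by omega) (-1) (by norm_num)),
      ← Function.iterate_succ_apply' derivative]
    ring

lemma sym_nonneg (m l : ℕ) : 0 ≤ ∫ t in (-1:ℝ)..1, t^m * (1 - t^2)^l := by
  set f : ℝ → ℝ := fun t => t^m * (1 - t^2)^l with hf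
  have hc : Continuous f := by fun_prop
  have h1 : (∫ t in (-1:ℝ)..1, f (-t)) = ∫ t in (-1:ℝ)..1, f t := by
    simpa using intervalIntegral.integral_comp_neg (a := (-1:ℝ)) (b := 1) f
  have h2 : (∫ t in (-1:ℝ)..1, (f t + f (-t)))
      = (∫ t in (-1:ℝ)..1, f t) + ∫ t in (-1:ℝ)..1, f (-t) :=
    intervalIntegral.integral_add (hc.intervalIntegrable _ _)
      ((hc.comp continuous_neg).intervalIntegrable _ _)
  have h3 : 0 ≤ ∫ t in (-1:ℝ)..1, (f t + f (-t)) := by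
    apply intervalIntegral.integral_nonneg (by norm_num)
    intro x hx
    have hx2 : (0:ℝ) ≤ 1 - x^2 := by nlinarith [hx.1, hx.2]
    have : f x + f (-x) = (x^m + (-x)^m) * (1 - x^2)^l := by
      simp only [hf]; ring
    rw [this]
    apply mul_nonneg _ (pow_nonneg hx2 _)
    rcases Nat.even_or_odd m with he | ho
    · rw [he.neg_pow]
      have := he.pow_nonneg x
      linarith
    · rw [ho.neg_pow]; linarith
  nlinarith [h1, h2, h3]

/-- The Legendre polynomial of degree `n` (normalized so `P n 1 = 1`),
via the Rodrigues formula. -/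
noncomputable def legendreP (n : ℕ) : Polynomial ℝ :=
  Polynomial.C (1 / ((2:ℝ)^n * n.factorial)) *
    (Polynomial.derivative^[n] ((Polynomial.X^2 - 1)^n))

/-- For all integers `n, ℓ ≥ 0`, `∫_{−1}^1 t^n P_ℓ(t) dt ≥ 0`. -/
theorem stmt_9 (n l : ℕ) :
    0 ≤ ∫ t in (-1:ℝ)..1, t^n * (legendreP l).eval t := by
  have step1 : (∫ t in (-1:ℝ)..1, t^n * (legendreP l).eval t)
      = (1/((2:ℝ)^l * l.factorial)) *
        ∫ t in (-1:ℝ)..1, t^n * (derivative^[l] ((X^2 - 1 : ℝ[X])^l)).eval t := by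
    rw [← intervalIntegral.integral_const_mul]
    apply intervalIntegral.integral_congr
    intro t _
    simp [legendreP]
    ring
  have key := iter_ibp n l l le_rfl
  rw [Nat.sub_self, Function.iterate_zero_apply] at key
  have step2 : (∫ t in (-1:ℝ)..1,
        (derivative^[l] (X^n : ℝ[X])).eval t * ((X^2 - 1 : ℝ[X])^l).eval t)
      = (n.descFactorial l : ℝ) * ∫ t in (-1:ℝ)..1, t^(n-l) * (t^2 - 1)^l := by
    rw [← intervalIntegral.integral_const_mul]
    apply intervalIntegral.integral_congr
    intro t _
    rw [iterate_derivative_X_pow_eq_natCast_mul]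
    simp
    ring
  have step3 : ((-1:ℝ)^l * ∫ t in (-1:ℝ)..1, t^(n-l) * (t^2 - 1)^l)
      = ∫ t in (-1:ℝ)..1, t^(n-l) * (1 - t^2)^l := by
    rw [← intervalIntegral.integral_const_mul]
    apply intervalIntegral.integral_congr
    intro t _
    have : ((-1:ℝ))^l * (t^2-1)^l = (1-t^2)^l := by
      rw [← mul_pow]; congr 1; ring
    calc (-1:ℝ)^l * (t^(n-l) * (t^2-1)^l) = t^(n-l) * ((-1:ℝ)^l * (t^2-1)^l) := by ring
      _ = t^(n-l) * (1-t^2)^l := by rw [this]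
  rw [step1, key, step2]
  have : ((-1:ℝ)^l * ((n.descFactorial l : ℝ) * ∫ t in (-1:ℝ)..1, t^(n-l) * (t^2 - 1)^l))
      = (n.descFactorial l : ℝ) * ∫ t in (-1:ℝ)..1, t^(n-l) * (1 - t^2)^l := by
    rw [← step3]; ring
  rw [this]
  have h := sym_nonneg (n-l) l
  positivity
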